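/- Let S and R be independent real Gaussian random variables with mean zero, Var(S) = σ_S² > 0 and Var(R) = σ_R² > 0. Then P(sign(S) = sign(S+R)) = 1/2 + (1/π) arctan(σ_S / σ_R). -/

import Mathlib

/-!
Let `H t = ∫_{x > 0} Φ_R (t x) dγ_S(x)`, where `γ_S` is the law of `S` and `Φ_R` the distribution
function of `R`. By independence, `P(S > 0, S + R > 0) = H 1`, and since `(S, R)` and `(-S, -R)`
have the same law and `S ≠ 0` almost surely, the probability in question is `2 H 1`.
Differentiating under the integral sign, `H' t = ∫_{x > 0} x φ_R (t x) φ_S x dx` is an elementary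
Gaussian integral, equal to `σ_S σ_R / (2π (σ_R² + t² σ_S²))`, the derivative of
`arctan (t σ_S / σ_R) / (2π)`. As `H 0 = 1/4`, this gives `H 1 = 1/4 + arctan (σ_S / σ_R) / (2π)`.
-/

open MeasureTheory ProbabilityTheory Real Set Filter
open scoped NNReal

lemma Real.sign_eq_sign_iff_of_ne_zero {a b : ℝ} (ha : a ≠ 0) :
    Real.sign a = Real.sign b ↔ (0 < a ∧ 0 < b) ∨ (a < 0 ∧ b < 0) := by
  rcases ha.lt_or_gt with ha | ha <;> rcases lt_trichotomy b 0 with hb | hb | hb <;>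
    simp [*, sign_of_neg, sign_of_pos, lt_asymm] <;> norm_num

lemma continuous_gaussianPDFReal (μ : ℝ) (v : ℝ≥0) : Continuous (gaussianPDFReal μ v) := by
  unfold gaussianPDFReal
  fun_prop

lemma gaussianPDFReal_le (μ : ℝ) (v : ℝ≥0) (x : ℝ) :
    gaussianPDFReal μ v x ≤ (√(2 * π * v))⁻¹ := by
  rw [gaussianPDFReal_def]
  refine mul_le_of_le_one_right (by positivity) (exp_le_one_iff.mpr ?_)
  exact div_nonpos_of_nonpos_of_nonneg (neg_nonpos.mpr (sq_nonneg _)) (by positivity)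

lemma hasDerivAt_cdf_gaussianReal (μ : ℝ) {v : ℝ≥0} (hv : v ≠ 0) (x : ℝ) :
    HasDerivAt (cdf (gaussianReal μ v)) (gaussianPDFReal μ v x) x := by
  set f := gaussianPDFReal μ v
  have hf : Integrable f := integrable_gaussianPDFReal μ v
  have hcdf : ⇑(cdf (gaussianReal μ v)) = fun y => (∫ t in Iic 0, f t) + ∫ t in 0..y, f t := by
    ext y
    rw [cdf_eq_real, measureReal_def, gaussianReal_apply_eq_integral μ hv, ENNReal.toReal_ofReal
        (setIntegral_nonneg measurableSet_Iic fun t _ => gaussianPDFReal_nonneg μ v t),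
      ← intervalIntegral.integral_Iic_sub_Iic hf.integrableOn hf.integrableOn]
    ring
  rw [hcdf]
  exact (intervalIntegral.integral_hasDerivAt_right hf.intervalIntegrable
    ((continuous_gaussianPDFReal μ v).stronglyMeasurableAtFilter _ _)
    (continuous_gaussianPDFReal μ v).continuousAt).const_add _

lemma gaussianReal_zero_map_neg (v : ℝ≥0) :
    (gaussianReal 0 v).map (fun x => -x) = gaussianReal 0 v := by
  simpa using gaussianReal_map_neg (μ := 0) (v := v)

lemma gaussianReal_zero_Ioi_neg {v : ℝ≥0} (hv : v ≠ 0) (x : ℝ) :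
    gaussianReal 0 v (Ioi (-x)) = gaussianReal 0 v (Iic x) := by
  have := nullSingletonClass_gaussianReal (μ := 0) hv
  rw [← gaussianReal_zero_map_neg, Measure.map_apply measurable_neg measurableSet_Ioi,
    gaussianReal_zero_map_neg, ← measure_congr Iio_ae_eq_Iic]
  congr 1
  ext y
  simp

lemma cdf_gaussianReal_zero {v : ℝ≥0} (hv : v ≠ 0) : cdf (gaussianReal 0 v) 0 = 1 / 2 := by
  have hsymm : (gaussianReal 0 v).real (Iic 0) = (gaussianReal 0 v).real (Iic 0)ᶜ := by
    rw [compl_Iic, measureReal_def, measureReal_def, ← gaussianReal_zero_Ioi_neg hv, neg_zero]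
  rw [probReal_compl_eq_one_sub measurableSet_Iic] at hsymm
  rw [cdf_eq_real]
  linarith

lemma integral_Ioi_mul_exp_neg_mul_sq {b : ℝ} (hb : 0 < b) :
    ∫ x in Ioi (0 : ℝ), x * exp (-b * x ^ 2) = (2 * b)⁻¹ := by
  have hderiv : ∀ x ∈ Ici (0 : ℝ),
      HasDerivAt (fun x => -(2 * b)⁻¹ * exp (-b * x ^ 2)) (x * exp (-b * x ^ 2)) x := by
    intro x _
    refine (((hasDerivAt_pow 2 x).const_mul (-b)).exp.const_mul (-(2 * b)⁻¹)).congr_deriv ?_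
    field_simp
    ring
  have hlim : Tendsto (fun x => -(2 * b)⁻¹ * exp (-b * x ^ 2)) atTop (nhds (-(2 * b)⁻¹ * 0)) :=
    (tendsto_exp_atBot.comp ((tendsto_pow_atTop two_ne_zero).const_mul_atTop_of_neg
      (neg_lt_zero.2 hb))).const_mul _
  simpa using integral_Ioi_of_hasDerivAt_of_tendsto' hderiv
    (integrable_mul_exp_neg_mul_sq hb).integrableOn hlim

lemma setIntegral_gaussianReal {μ : ℝ} {v : ℝ≥0} (hv : v ≠ 0) {s : Set ℝ}
    (hs : MeasurableSet s) (g : ℝ → ℝ) :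
    ∫ x in s, g x ∂gaussianReal μ v = ∫ x in s, gaussianPDFReal μ v x * g x := by
  rw [← integral_indicator hs, integral_gaussianReal_eq_integral_smul hv, ← integral_indicator hs]
  congr 1
  ext x
  by_cases hx : x ∈ s <;> simp [hx]

lemma gaussianPDFReal_mul_gaussianPDFReal_mul (vS vR : ℝ≥0) (t x : ℝ) :
    gaussianPDFReal 0 vS x * gaussianPDFReal 0 vR (t * x) =
      (√(2 * π * vS))⁻¹ * (√(2 * π * vR))⁻¹ *
        exp (-((2 * (vS : ℝ))⁻¹ + t ^ 2 * (2 * (vR : ℝ))⁻¹) * x ^ 2) := by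
  simp only [gaussianPDFReal_def, sub_zero]
  rw [mul_mul_mul_comm, ← exp_add]
  congr 2
  ring

lemma setIntegral_Ioi_gaussianPDFReal_mul_gaussianReal {vS vR : ℝ≥0} (hvS : vS ≠ 0)
    (hvR : vR ≠ 0) (t : ℝ) :
    ∫ x in Ioi 0, gaussianPDFReal 0 vR (t * x) * x ∂gaussianReal 0 vS =
      √vS * √vR / (2 * π * (vR + t ^ 2 * vS)) := by
  have hS : (0 : ℝ) < √vS := sqrt_pos.mpr (by positivity)
  have hR : (0 : ℝ) < √vR := sqrt_pos.mpr (by positivity)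
  have hb : (0 : ℝ) < (2 * (vS : ℝ))⁻¹ + t ^ 2 * (2 * (vR : ℝ))⁻¹ := by positivity
  simp_rw [setIntegral_gaussianReal hvS measurableSet_Ioi, ← mul_assoc,
    gaussianPDFReal_mul_gaussianPDFReal_mul, mul_assoc _ (exp _), mul_comm (exp _),
    integral_const_mul, integral_Ioi_mul_exp_neg_mul_sq hb,
    sqrt_mul (by positivity : (0 : ℝ) ≤ 2 * π)]
  have h2π : √(2 * π) ^ 2 = 2 * π := sq_sqrt (by positivity)
  have hvS2 : (vS : ℝ) = √vS ^ 2 := (sq_sqrt vS.2).symm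
  have hvR2 : (vR : ℝ) = √vR ^ 2 := (sq_sqrt vR.2).symm
  set a := √(vS : ℝ)
  set c := √(vR : ℝ)
  rw [hvS2, hvR2]
  field_simp
  exact h2π.symm

lemma continuous_cdf_gaussianReal (μ : ℝ) {v : ℝ≥0} (hv : v ≠ 0) :
    Continuous (cdf (gaussianReal μ v)) :=
  continuous_iff_continuousAt.mpr fun x => (hasDerivAt_cdf_gaussianReal μ hv x).continuousAt

lemma hasDerivAt_setIntegral_Ioi_cdf_gaussianReal {vS vR : ℝ≥0} (hvS : vS ≠ 0) (hvR : vR ≠ 0)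
    (t₀ : ℝ) :
    HasDerivAt (fun t => ∫ x in Ioi 0, cdf (gaussianReal 0 vR) (t * x) ∂gaussianReal 0 vS)
      (√vS * √vR / (2 * π * (vR + t₀ ^ 2 * vS))) t₀ := by
  have hcdf := continuous_cdf_gaussianReal 0 hvR
  have hbound : Integrable (fun x => (√(2 * π * vR))⁻¹ * |x|) (gaussianReal 0 vS) :=
    ((memLp_id_gaussianReal 1).integrable le_rfl).abs.const_mul _
  obtain ⟨-, h⟩ := hasDerivAt_integral_of_dominated_loc_of_deriv_le
    (μ := (gaussianReal 0 vS).restrict (Ioi 0)) (x₀ := t₀) (s := univ)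
    (F := fun t x => cdf (gaussianReal 0 vR) (t * x))
    (F' := fun t x => gaussianPDFReal 0 vR (t * x) * x)
    (bound := fun x => (√(2 * π * vR))⁻¹ * |x|) univ_mem
    (Eventually.of_forall fun t => (hcdf.comp (continuous_const_mul t)).aestronglyMeasurable)
    (Integrable.of_bound (hcdf.comp (continuous_const_mul t₀)).aestronglyMeasurable 1
      (ae_of_all _ fun x => by
        simpa [abs_of_nonneg (cdf_nonneg _ _)] using cdf_le_one _ _))
    (((continuous_gaussianPDFReal 0 vR).comp (continuous_const_mul t₀)).mul
      continuous_id).aestronglyMeasurable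
    (ae_of_all _ fun x t _ => by
      rw [norm_mul, norm_of_nonneg (gaussianPDFReal_nonneg _ _ _), norm_eq_abs]
      exact mul_le_mul_of_nonneg_right (gaussianPDFReal_le _ _ _) (abs_nonneg x))
    hbound.restrict
    (ae_of_all _ fun x t _ =>
      (hasDerivAt_cdf_gaussianReal 0 hvR (t * x)).comp t (hasDerivAt_mul_const x))
  rwa [setIntegral_Ioi_gaussianPDFReal_mul_gaussianReal hvS hvR] at h

lemma measureReal_gaussianReal_Ioi_zero {v : ℝ≥0} (hv : v ≠ 0) :
    (gaussianReal 0 v).real (Ioi 0) = 1 / 2 := by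
  have h := gaussianReal_zero_Ioi_neg hv 0
  rw [neg_zero] at h
  rw [measureReal_def, h, ← measureReal_def, ← cdf_eq_real, cdf_gaussianReal_zero hv]

lemma setIntegral_Ioi_cdf_gaussianReal {vS vR : ℝ≥0} (hvS : vS ≠ 0) (hvR : vR ≠ 0) :
    ∫ x in Ioi 0, cdf (gaussianReal 0 vR) x ∂gaussianReal 0 vS =
      1 / 4 + arctan (√vS / √vR) / (2 * π) := by
  set H := fun t => ∫ x in Ioi 0, cdf (gaussianReal 0 vR) (t * x) ∂gaussianReal 0 vS
  have hderiv : ∀ t, HasDerivAt (fun t => H t - arctan (√vS / √vR * t) / (2 * π)) 0 t := by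
    intro t
    refine ((hasDerivAt_setIntegral_Ioi_cdf_gaussianReal hvS hvR t).fun_sub
      (((hasDerivAt_id' t).const_mul (√vS / √vR)).arctan.div_const (2 * π))).congr_deriv ?_
    have hS : (0 : ℝ) < √vS := sqrt_pos.mpr (by positivity)
    have hR : (0 : ℝ) < √vR := sqrt_pos.mpr (by positivity)
    have hvS2 : (vS : ℝ) = √vS ^ 2 := (sq_sqrt vS.2).symm
    have hvR2 : (vR : ℝ) = √vR ^ 2 := (sq_sqrt vR.2).symm
    set a := √(vS : ℝ)
    set c := √(vR : ℝ)
    rw [hvS2, hvR2]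
    field_simp
    ring
  have hconst := is_const_of_deriv_eq_zero (fun t => (hderiv t).differentiableAt)
    (fun t => (hderiv t).deriv) 1 0
  have hH0 : H 0 = 1 / 4 := by
    simp only [H, zero_mul, cdf_gaussianReal_zero hvR, integral_const, smul_eq_mul,
      measureReal_restrict_apply_univ, measureReal_gaussianReal_Ioi_zero hvS]
    norm_num
  simp only [H, one_mul, mul_one, mul_zero, arctan_zero, zero_div, sub_zero, hH0] at hconst
  linarith

lemma Measure.prod_map_neg {α β : Type*} [MeasurableSpace α] [MeasurableSpace β] [Neg α] [Neg β]
    [MeasurableNeg α] [MeasurableNeg β] {μ : Measure α} {ν : Measure β} [SFinite μ] [SFinite ν]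
    (hμ : μ.map (fun x => -x) = μ) (hν : ν.map (fun y => -y) = ν) :
    (μ.prod ν).map (fun p => -p) = μ.prod ν := by
  conv_rhs => rw [← hμ, ← hν]
  rw [Measure.map_prod_map _ _ measurable_neg measurable_neg]
  rfl

lemma measurableSet_setOf_pos_fst_pos_add :
    MeasurableSet {p : ℝ × ℝ | 0 < p.1 ∧ 0 < p.1 + p.2} :=
  (measurableSet_lt measurable_const measurable_fst).inter
    (measurableSet_lt measurable_const (measurable_fst.add measurable_snd))

lemma gaussianReal_prod_real_pos_fst_pos_add {vS vR : ℝ≥0} (hvR : vR ≠ 0) :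
    ((gaussianReal 0 vS).prod (gaussianReal 0 vR)).real {p | 0 < p.1 ∧ 0 < p.1 + p.2} =
      ∫ x in Ioi 0, cdf (gaussianReal 0 vR) x ∂gaussianReal 0 vS := by
  have hslice : ∀ x, gaussianReal 0 vR (Prod.mk x ⁻¹' {p | 0 < p.1 ∧ 0 < p.1 + p.2}) =
      (Ioi 0).indicator (fun x => gaussianReal 0 vR (Iic x)) x := by
    intro x
    by_cases hx : 0 < x
    · rw [indicator_of_mem (mem_Ioi.mpr hx), ← gaussianReal_zero_Ioi_neg hvR]
      congr 1
      ext y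
      simp [hx, neg_lt_iff_pos_add']
    · simp [hx]
  have hmono : Monotone fun x => gaussianReal 0 vR (Iic x) :=
    fun _ _ h => measure_mono (Iic_subset_Iic.mpr h)
  rw [measureReal_def, Measure.prod_apply measurableSet_setOf_pos_fst_pos_add,
    lintegral_congr hslice, lintegral_indicator measurableSet_Ioi,
    ← integral_toReal hmono.measurable.aemeasurable (ae_of_all _ fun _ => measure_lt_top _ _)]
  simp_rw [cdf_eq_real, measureReal_def]

/-- **Sign-agreement probability for independent centred Gaussians.** If `S ∼ N(0, σS²)`
and `R ∼ N(0, σR²)` are independent with `σS, σR > 0`, then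
`P(sign S = sign (S + R)) = 1/2 + (1/π) arctan(σS/σR)`. -/
theorem stmt_9 {Ω : Type*} [MeasurableSpace Ω] (μ : Measure Ω) [IsProbabilityMeasure μ]
    (S R : Ω → ℝ) (hS : Measurable S) (hR : Measurable R)
    (vS vR : NNReal) (hvS : 0 < vS) (hvR : 0 < vR)
    (hSlaw : μ.map S = gaussianReal 0 vS) (hRlaw : μ.map R = gaussianReal 0 vR)
    (hindep : IndepFun S R μ) :
    (μ {ω | Real.sign (S ω) = Real.sign (S ω + R ω)}).toReal =
      1 / 2 + (1 / Real.pi) * Real.arctan (Real.sqrt vS / Real.sqrt vR) := by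
  set A : Set (ℝ × ℝ) := {p | 0 < p.1 ∧ 0 < p.1 + p.2}
  have hA : MeasurableSet A := measurableSet_setOf_pos_fst_pos_add
  have hlaw : μ.map (fun ω => (S ω, R ω)) = (gaussianReal 0 vS).prod (gaussianReal 0 vR) := by
    rw [← hSlaw, ← hRlaw]
    exact (indepFun_iff_map_prod_eq_prod_map_map hS.aemeasurable hR.aemeasurable).mp hindep
  have hS_ne : ∀ᵐ ω ∂μ, S ω ≠ 0 := by
    have := nullSingletonClass_gaussianReal (μ := 0) hvS.ne'
    exact ae_of_ae_map hS.aemeasurable (by rw [hSlaw]; exact Measure.ae_ne _ 0)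
  have hevent : {ω | Real.sign (S ω) = Real.sign (S ω + R ω)} =ᵐ[μ]
      (fun ω => (S ω, R ω)) ⁻¹' (A ∪ (fun p => -p) ⁻¹' A) := by
    filter_upwards [hS_ne] with ω hω
    refine propext ?_
    show Real.sign (S ω) = Real.sign (S ω + R ω) ↔
      (0 < S ω ∧ 0 < S ω + R ω) ∨ (0 < -S ω ∧ 0 < -S ω + -R ω)
    rw [Real.sign_eq_sign_iff_of_ne_zero hω]
    grind
  have hdisj : Disjoint A ((fun p => -p) ⁻¹' A) :=
    disjoint_left.mpr fun p hp hp' => by simp [A] at hp hp'; linarith [hp.1, hp'.1]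
  rw [measure_congr hevent, ← Measure.map_apply (hS.prodMk hR) (hA.union (measurable_neg hA)),
    hlaw, measure_union hdisj (measurable_neg hA), ← Measure.map_apply measurable_neg hA,
    Measure.prod_map_neg (gaussianReal_zero_map_neg vS) (gaussianReal_zero_map_neg vR),
    ENNReal.toReal_add (measure_ne_top _ _) (measure_ne_top _ _), ← measureReal_def,
    gaussianReal_prod_real_pos_fst_pos_add hvR.ne',
    setIntegral_Ioi_cdf_gaussianReal hvS.ne' hvR.ne']
  ring
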